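/- For every set W of vertices of G₂ with |W| < ∏_{i=1}^{m−1} (p_i − 1), the graph G₂ − W obtained by deleting the vertices of W is connected. -/

import Mathlib

open Finset

abbrev NN (m : ℕ) (p : Fin m → ℕ) : ℕ := ∏ i, p i

abbrev Vtx (m : ℕ) (p : Fin m → ℕ) : Type :=
  {x : ZMod (NN m p) // x ≠ 0 ∧ ¬ IsUnit x}

/-- The induced subgraph `G₂` of the comaximal graph of `ℤ/nℤ` on nonzero nonunits. -/
def G2 (m : ℕ) (p : Fin m → ℕ) : SimpleGraph (Vtx m p) where
  Adj x y := x ≠ y ∧ Ideal.span ({x.1, y.1} : Set (ZMod (NN m p))) = ⊤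
  symm := by
    constructor
    rintro x y ⟨hxy, h⟩
    exact ⟨hxy.symm, by rwa [Set.pair_comm]⟩
  loopless := by constructor; rintro x ⟨h, -⟩; exact h rfl

/-- The zero-set of `x`: indices `i` where the image of `x` in `ℤ/p_iℤ` is zero. -/
def Z (m : ℕ) (p : Fin m → ℕ) (x : ZMod (NN m p)) : Finset (Fin m) :=
  Finset.univ.filter fun i =>
    (ZMod.castHom (Finset.dvd_prod_of_mem p (Finset.mem_univ i)) (ZMod (p i))) x = 0

/-- The class `X_S` of vertices of `G₂` with zero-set `S`. -/
def XS (m : ℕ) (p : Fin m → ℕ) (S : Finset (Fin m)) : Set (Vtx m p) :=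
  {x | Z m p x.1 = S}

/-! Via the Chinese remainder theorem `ℤ/nℤ ≅ ∏ ℤ/p_iℤ`, two vertices `x`, `y` are adjacent
exactly when their zero-sets `Z x`, `Z y` are disjoint. The class `X_{j}` of vertices vanishing
exactly at `p_j` has `∏_{i ≠ j} (p_i - 1) ≥ ∏_{i ≠ m} (p_i - 1) > |W|` elements, so it keeps a
vertex `v_j` outside `W`. The `v_j` form a clique, and a surviving vertex `x ≠ 0` is adjacent to
`v_j` for any `j ∉ Z x`. -/

theorem Pi.isCoprime_iff {ι : Type*} {R : ι → Type*} [∀ i, CommSemiring (R i)]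
    {x y : ∀ i, R i} : IsCoprime x y ↔ ∀ i, IsCoprime (x i) (y i) :=
  ⟨fun h i => h.map (Pi.evalRingHom R i), fun h => by
    choose a b hab using h
    exact ⟨a, b, funext hab⟩⟩

theorem RingEquiv.isCoprime_iff {R S : Type*} [CommSemiring R] [CommSemiring S] (e : R ≃+* S)
    {x y : R} : IsCoprime (e x) (e y) ↔ IsCoprime x y :=
  ⟨fun h => by simpa using h.map e.symm.toRingHom, fun h => h.map e.toRingHom⟩

theorem Ideal.span_pair_eq_top_iff_isCoprime {R : Type*} [CommRing R] {x y : R} :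
    Ideal.span {x, y} = ⊤ ↔ IsCoprime x y := by
  rw [Ideal.eq_top_iff_one, Ideal.mem_span_pair]
  exact ⟨fun ⟨a, b, h⟩ => ⟨a, b, h⟩, fun ⟨a, b, h⟩ => ⟨a, b, h⟩⟩

theorem prod_erase_le_prod_erase {ι : Type*} [Fintype ι] [DecidableEq ι] {f : ι → ℕ}
    {j k : ι} (hjk : f j ≤ f k) (hk : 0 < f k) :
    ∏ i ∈ univ.erase k, f i ≤ ∏ i ∈ univ.erase j, f i := by
  refine Nat.le_of_mul_le_mul_right ?_ hk
  calc (∏ i ∈ univ.erase k, f i) * f k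
      = (∏ i ∈ univ.erase j, f i) * f j := by
        rw [prod_erase_mul _ _ (mem_univ k), prod_erase_mul _ _ (mem_univ j)]
    _ ≤ (∏ i ∈ univ.erase j, f i) * f k := Nat.mul_le_mul_left _ hjk

open scoped Function

section ZeroSet

variable {m : ℕ} {p : Fin m → ℕ}

theorem mem_Z_iff (hcop : Pairwise (Nat.Coprime on p)) {x : ZMod (NN m p)} {i : Fin m} :
    i ∈ Z m p x ↔ ZMod.prodEquivPi p hcop x i = 0 := by
  rw [ZMod.prodEquivPi_apply, Z, mem_filter, and_iff_right (mem_univ i)]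

theorem Z_prodEquivPi_symm (hcop : Pairwise (Nat.Coprime on p)) (f : ∀ i, ZMod (p i)) :
    Z m p ((ZMod.prodEquivPi p hcop).symm f) = univ.filter fun i => f i = 0 := by
  ext i
  rw [mem_Z_iff hcop, RingEquiv.apply_symm_apply, mem_filter, and_iff_right (mem_univ i)]

theorem Z_eq_univ_iff (hcop : Pairwise (Nat.Coprime on p)) {x : ZMod (NN m p)} :
    Z m p x = univ ↔ x = 0 := by
  rw [← map_eq_zero_iff _ (ZMod.prodEquivPi p hcop).injective, funext_iff, eq_univ_iff_forall]
  simp only [mem_Z_iff hcop, Pi.zero_apply]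

variable [∀ i, Fact (p i).Prime]

instance : NeZero (NN m p) :=
  ⟨(prod_pos fun i _ => (Fact.out : (p i).Prime).pos).ne'⟩

theorem Z_eq_empty_iff (hcop : Pairwise (Nat.Coprime on p)) {x : ZMod (NN m p)} :
    Z m p x = ∅ ↔ IsUnit x := by
  rw [← MulEquiv.isUnit_map (ZMod.prodEquivPi p hcop), Pi.isUnit_iff, eq_empty_iff_forall_notMem]
  simp only [mem_Z_iff hcop, isUnit_iff_ne_zero]

theorem span_pair_eq_top_iff (hcop : Pairwise (Nat.Coprime on p)) {x y : ZMod (NN m p)} :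
    Ideal.span {x, y} = ⊤ ↔ Disjoint (Z m p x) (Z m p y) := by
  rw [Ideal.span_pair_eq_top_iff_isCoprime, ← (ZMod.prodEquivPi p hcop).isCoprime_iff,
    Pi.isCoprime_iff, disjoint_left]
  simp only [mem_Z_iff hcop, Semifield.isCoprime_iff, ← not_and_or, not_and]

theorem G2_adj_iff (hcop : Pairwise (Nat.Coprime on p)) {u v : Vtx m p} :
    (G2 m p).Adj u v ↔ Disjoint (Z m p u.1) (Z m p v.1) := by
  refine ⟨fun h => (span_pair_eq_top_iff hcop).mp h.2,
    fun h => ⟨?_, (span_pair_eq_top_iff hcop).mpr h⟩⟩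
  rintro rfl
  exact u.2.2 ((Z_eq_empty_iff hcop).mp (disjoint_self.mp h))

theorem ncard_XS (hcop : Pairwise (Nat.Coprime on p)) {S : Finset (Fin m)} (hS : S.Nonempty)
    (hSu : S ≠ univ) : (XS m p S).ncard = ∏ i ∈ Sᶜ, (p i - 1) := by
  set e := ZMod.prodEquivPi p hcop
  let t : ∀ i, Finset (ZMod (p i)) := fun i => if i ∈ S then {0} else univ.erase 0
  have himage : (fun v : Vtx m p => e v.1) '' XS m p S = Fintype.piFinset t := by
    ext f
    have hf : f ∈ Fintype.piFinset t ↔ Z m p (e.symm f) = S := by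
      rw [Fintype.mem_piFinset, Z_prodEquivPi_symm hcop, Finset.ext_iff]
      refine forall_congr' fun i => ?_
      by_cases hi : i ∈ S <;> simp [t, hi]
    rw [Finset.mem_coe, hf]
    constructor
    · rintro ⟨v, hv, rfl⟩
      rwa [e.symm_apply_apply]
    · intro hZ
      refine ⟨⟨e.symm f, ?_, ?_⟩, hZ, e.apply_symm_apply f⟩
      · rwa [Ne, ← Z_eq_univ_iff hcop, hZ]
      · rw [← Z_eq_empty_iff hcop, hZ]
        exact hS.ne_empty
  have hinj : Function.Injective fun v : Vtx m p => e v.1 :=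
    fun u v h => Subtype.ext (e.injective h)
  rw [← Set.ncard_image_of_injective _ hinj, himage, Set.ncard_coe_finset,
    Fintype.card_piFinset]
  simp [t, apply_ite card, prod_ite, ZMod.card, card_erase_of_mem, filter_notMem_eq_sdiff,
    compl_eq_univ_sdiff]

theorem exists_mem_XS_singleton_notMem [Nontrivial (Fin m)] (hcop : Pairwise (Nat.Coprime on p))
    {W : Set (Vtx m p)} {k : Fin m} (hk : ∀ j, p j ≤ p k)
    (hW : W.ncard < ∏ i ∈ univ.erase k, (p i - 1)) (j : Fin m) : ∃ v ∈ XS m p {j}, v ∉ W := by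
  refine Set.exists_mem_notMem_of_ncard_lt_ncard (hW.trans_le ?_)
  rw [ncard_XS hcop (singleton_nonempty j) (singleton_ne_univ j), compl_singleton]
  exact prod_erase_le_prod_erase (Nat.sub_le_sub_right (hk j) 1)
    (Nat.sub_pos_of_lt (Fact.out : (p k).Prime).one_lt)

theorem connected_induce_compl_of_forall_exists_mem_XS_singleton [Nonempty (Fin m)]
    (hcop : Pairwise (Nat.Coprime on p)) {W : Set (Vtx m p)}
    (h : ∀ j, ∃ v ∈ XS m p {j}, v ∉ W) : ((G2 m p).induce Wᶜ).Connected := by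
  choose v hvX hvW using h
  let hub (j : Fin m) : ↥Wᶜ := ⟨v j, hvW j⟩
  have hub_adj {j : Fin m} {u : ↥Wᶜ} (hj : j ∉ Z m p u.1.1) :
      ((G2 m p).induce Wᶜ).Adj (hub j) u :=
    (G2_adj_iff (u := v j) hcop).mpr (by rw [hvX j]; exact disjoint_singleton_left.mpr hj)
  let j₀ : Fin m := Classical.arbitrary _
  refine (SimpleGraph.connected_iff_exists_forall_reachable _).mpr ⟨hub j₀, fun u => ?_⟩
  obtain ⟨j, hj⟩ : ∃ j, j ∉ Z m p u.1.1 := by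
    by_contra! h
    exact u.1.2.1 ((Z_eq_univ_iff hcop).mp (eq_univ_iff_forall.mpr h))
  by_cases hjj : j = j₀
  · exact hjj ▸ (hub_adj hj).reachable
  · have hj₀ : j₀ ∉ Z m p (hub j).1.1 := by
      rw [hvX j]
      exact notMem_singleton.mpr (Ne.symm hjj)
    exact (hub_adj hj₀).reachable.trans (hub_adj hj).reachable

end ZeroSet

theorem stmt12 (m : ℕ) (hm : 2 ≤ m) (p : Fin m → ℕ) (hp : ∀ i, (p i).Prime)
    (hmono : StrictMono p) (W : Set (Vtx m p))
    (hW : W.ncard < ∏ i ∈ Finset.univ.erase (⟨m - 1, by omega⟩ : Fin m), (p i - 1)) :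
    ((G2 m p).induce Wᶜ).Connected := by
  have : ∀ i, Fact (p i).Prime := fun i => ⟨hp i⟩
  have : Nontrivial (Fin m) := Fin.nontrivial_iff_two_le.mpr hm
  have hcop : Pairwise (Nat.Coprime on p) := fun i j hij =>
    (Nat.coprime_primes (hp i) (hp j)).mpr (hmono.injective.ne hij)
  have hlast (j : Fin m) : p j ≤ p ⟨m - 1, by omega⟩ :=
    hmono.monotone (Fin.le_def.mpr (by simp only; omega))
  exact connected_induce_compl_of_forall_exists_mem_XS_singleton hcop
    (exists_mem_XS_singleton_notMem hcop hlast hW)
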